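/- arXiv:0712.4185 — 5 statements merged into one kernel-verified Lean document; each statement's English description precedes it below -/
import Mathlib

section
/- For Boolean Appell polynomials A_n of a unital linear functional μ with moments m_k = μ(x^k), the monomials expand as x^n = Σ_{k=0}^{n} m_k A_{n-k}(x) for all n ≥ 0. -/
open PowerSeries

/-- Moment generating series of a unital linear functional on polynomials. -/
noncomputable def mgf (mu : Polynomial ℂ →ₗ[ℂ] ℂ) : PowerSeries ℂ :=
  PowerSeries.mk fun n => if n = 0 then 0 else mu (Polynomial.X ^ n)

/-- Boolean cumulants, the coefficients of `η = 1 - (1 + M)⁻¹`. -/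
noncomputable def bcum (mu : Polynomial ℂ →ₗ[ℂ] ℂ) (n : ℕ) : ℂ :=
  PowerSeries.coeff n (1 - (1 + mgf mu)⁻¹)

/-- Boolean Appell polynomials `A_n(x) = x^n - Σ_{k=1}^n κ_k x^{n-k}`. -/
noncomputable def appell (mu : Polynomial ℂ →ₗ[ℂ] ℂ) (n : ℕ) : Polynomial ℂ :=
  Polynomial.X ^ n - ∑ k ∈ Finset.Icc 1 n, Polynomial.C (bcum mu k) * Polynomial.X ^ (n - k)

/-!
With `m₀ = 1`, the Boolean cumulant series satisfies `(1 + M)⁻¹ = 1 - η`, so the coefficients of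
`A_n` are those of `(1 + M)⁻¹` read backwards: `A_n = Σ_{k ≤ n} [z^k](1 + M)⁻¹ x^{n-k}`.
Reading coefficients backwards in this way turns a product of power series into the convolution
`Σ_k m_k A_{n-k}`, and the product `(1 + M)(1 + M)⁻¹ = 1` is read as `x^n`.
-/

namespace PowerSeries

variable {R : Type*}

/-- The polynomial part of `X ^ n * f (1 / X)`. -/
noncomputable def reverseTrunc [CommSemiring R] (n : ℕ) (f : R⟦X⟧) : Polynomial R :=
  ∑ k ∈ Finset.range (n + 1), Polynomial.C (coeff k f) * Polynomial.X ^ (n - k)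

theorem reverseTrunc_one [CommSemiring R] (n : ℕ) :
    reverseTrunc n (1 : R⟦X⟧) = Polynomial.X ^ n := by
  rw [reverseTrunc, Finset.sum_range_succ']
  simp [coeff_one]

theorem reverseTrunc_sub [CommRing R] (n : ℕ) (f g : R⟦X⟧) :
    reverseTrunc n (f - g) = reverseTrunc n f - reverseTrunc n g := by
  simp only [reverseTrunc, map_sub, sub_mul, Finset.sum_sub_distrib]

theorem reverseTrunc_mul [CommSemiring R] (n : ℕ) (f g : R⟦X⟧) :
    reverseTrunc n (f * g) = ∑ k ∈ Finset.range (n + 1), coeff k f • reverseTrunc (n - k) g := by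
  have h := Finset.sum_range_diag_flip (n + 1) fun k j =>
    Polynomial.C (coeff k f * coeff j g) * (Polynomial.X : Polynomial R) ^ (n - k - j)
  simp only [reverseTrunc, coeff_mul, Finset.Nat.sum_antidiagonal_eq_sum_range_succ_mk, map_sum,
    Finset.sum_mul, Finset.smul_sum]
  convert h using 1
  · refine Finset.sum_congr rfl fun m _ => Finset.sum_congr rfl fun k hk => ?_
    rw [Finset.mem_range] at hk
    congr 2; omega
  · refine Finset.sum_congr rfl fun m hm => ?_
    rw [Finset.mem_range] at hm
    rw [show n - m + 1 = n + 1 - m by omega]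
    refine Finset.sum_congr rfl fun k _ => ?_
    rw [Polynomial.smul_eq_C_mul, map_mul, mul_assoc]

end PowerSeries

theorem bcum_zero (mu : Polynomial ℂ →ₗ[ℂ] ℂ) : bcum mu 0 = 0 := by
  simp [bcum, mgf, coeff_zero_eq_constantCoeff]

theorem coeff_one_add_mgf (mu : Polynomial ℂ →ₗ[ℂ] ℂ) (hmu : mu 1 = 1) (k : ℕ) :
    coeff k (1 + mgf mu) = mu (Polynomial.X ^ k) := by
  rcases eq_or_ne k 0 with rfl | hk
  · simp [mgf, hmu]
  · simp [mgf, coeff_one, hk]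

theorem appell_eq_reverseTrunc (mu : Polynomial ℂ →ₗ[ℂ] ℂ) (n : ℕ) :
    appell mu n = reverseTrunc n (1 + mgf mu)⁻¹ := by
  rw [← sub_sub_cancel 1 (1 + mgf mu)⁻¹, reverseTrunc_sub, reverseTrunc_one, appell]
  change _ = _ - ∑ k ∈ Finset.range (n + 1), Polynomial.C (bcum mu k) * Polynomial.X ^ (n - k)
  rw [Finset.range_eq_Ico, Finset.sum_eq_sum_Ico_succ_bot (by omega), zero_add,
    Finset.Ico_add_one_right_eq_Icc, bcum_zero, map_zero, zero_mul, zero_add]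

/-- Monomials expand in Boolean Appell polynomials as `x^n = Σ_{k=0}^n m_k A_{n-k}(x)`. -/
theorem stmt_5 (mu : Polynomial ℂ →ₗ[ℂ] ℂ) (hmu : mu 1 = 1) :
    ∀ n : ℕ, (Polynomial.X : Polynomial ℂ) ^ n =
      ∑ k ∈ Finset.range (n + 1), mu (Polynomial.X ^ k) • appell mu (n - k) := by
  intro n
  have hunit : constantCoeff (1 + mgf mu) ≠ 0 := by simp [mgf]
  calc Polynomial.X ^ n
      = reverseTrunc n ((1 + mgf mu) * (1 + mgf mu)⁻¹) := by
        rw [PowerSeries.mul_inv_cancel _ hunit, reverseTrunc_one]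
    _ = ∑ k ∈ Finset.range (n + 1), mu (Polynomial.X ^ k) • appell mu (n - k) := by
        simp only [reverseTrunc_mul, coeff_one_add_mgf mu hmu, appell_eq_reverseTrunc]
end

section
/- Let R(z), η(z), M(z) be formal power series with zero constant term related by the single-variable free and Boolean cumulant relations: R(z(1 + M(z))) = M(z) and η(z) = M(z)(1 + M(z))^{-1}. Define U(z) = V(z)·(1 + M(V(z))) for a formal power series V with zero constant term and nonzero linear coefficient. Then, as formal power series identities, (1 - x·U(z) + R(U(z)))^{-1} = (1 - x·V(z))^{-1} · (1 - η(V(z))), where x is a commuting indeterminate and inverses are taken in C[x][[z]]. -/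
open PowerSeries

/-- Formal composition `F(V)` of power series, valid when `V` has zero constant term. -/
noncomputable def pcomp {R : Type*} [CommRing R] (F V : PowerSeries R) : PowerSeries R :=
  PowerSeries.mk fun n =>
    ∑ k ∈ Finset.range (n + 1), PowerSeries.coeff k F * PowerSeries.coeff n (V ^ k)

/-- Lift a complex power series to a power series with polynomial coefficients. -/
noncomputable def plift : PowerSeries ℂ →+* PowerSeries (Polynomial ℂ) :=
  PowerSeries.map (Polynomial.C : ℂ →+* Polynomial ℂ)

/-!
Composing the free relation `R(z(1 + M(z))) = M(z)` with `V` gives `R(U) = M(V)`, so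
`1 - xU + R(U) = (1 + M(V))(1 - xV)`; composing the Boolean relation with `V` shows that
`1 + M(V)` has inverse `1 - η(V)`.
-/

namespace PowerSeries

variable {A : Type*} [CommRing A]

theorem coeff_pow_eq_zero_of_lt {V : A⟦X⟧} (hV : constantCoeff V = 0) {n k : ℕ} (h : n < k) :
    coeff n (V ^ k) = 0 :=
  coeff_of_lt_order n ((Nat.cast_lt.mpr h).trans_le (le_order_pow_of_constantCoeff_eq_zero k hV))

theorem pcomp_eq_subst {V : A⟦X⟧} (hV : constantCoeff V = 0) (F : A⟦X⟧) :
    pcomp F V = F.subst V := by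
  ext n
  rw [coeff_subst' (HasSubst.of_constantCoeff_zero' hV),
    finsum_eq_sum_of_support_subset (s := Finset.range (n + 1))]
  · simp [pcomp]
  · intro k hk
    by_contra hkn
    simp only [Finset.coe_range, Set.mem_Iio, not_lt] at hkn
    exact hk (by simp [coeff_pow_eq_zero_of_lt hV (show n < k by omega)])

theorem constantCoeff_pcomp (F V : A⟦X⟧) : constantCoeff (pcomp F V) = constantCoeff F := by
  rw [← coeff_zero_eq_constantCoeff_apply, ← coeff_zero_eq_constantCoeff_apply]
  simp [pcomp]

theorem pcomp_pcomp {V W : A⟦X⟧} (hV : constantCoeff V = 0) (hW : constantCoeff W = 0)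
    (F : A⟦X⟧) : pcomp (pcomp F W) V = pcomp F (pcomp W V) := by
  have hWV : constantCoeff (pcomp W V) = 0 := by rw [constantCoeff_pcomp, hW]
  rw [pcomp_eq_subst hV, pcomp_eq_subst hW, pcomp_eq_subst hWV, pcomp_eq_subst hV,
    subst_comp_subst_apply (HasSubst.of_constantCoeff_zero' hW) (HasSubst.of_constantCoeff_zero' hV)]

theorem subst_one {V : A⟦X⟧} (hV : HasSubst V) : (1 : A⟦X⟧).subst V = 1 := by
  rw [← coe_substAlgHom hV, map_one]

theorem constantCoeff_map {B : Type*} [CommRing B] (f : A →+* B) (φ : A⟦X⟧) :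
    constantCoeff (map f φ) = f (constantCoeff φ) := by
  rw [← coeff_zero_eq_constantCoeff_apply, coeff_map, coeff_zero_eq_constantCoeff_apply]

theorem invOfUnit_mul_eq_of_mul_eq_one {φ ψ χ : A⟦X⟧} (hφ : constantCoeff φ = 1)
    (hψ : constantCoeff ψ = 1) (hχ : φ * χ = 1) :
    invOfUnit (φ * ψ) 1 = invOfUnit ψ 1 * χ := by
  refine left_inv_eq_right_inv (invOfUnit_mul _ 1 (by simp [hφ, hψ])) ?_
  calc φ * ψ * (invOfUnit ψ 1 * χ) = (φ * χ) * (ψ * invOfUnit ψ 1) := by ring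
    _ = 1 := by rw [hχ, mul_invOfUnit ψ 1 (by simp [hψ]), one_mul]

end PowerSeries

theorem stmt_8_general (M R η V U : PowerSeries ℂ)
    (hM0 : PowerSeries.constantCoeff M = 0)
    (hV0 : PowerSeries.constantCoeff V = 0)
    (hR : pcomp R (PowerSeries.X * (1 + M)) = M)
    (hη : η * (1 + M) = M)
    (hU : U = V * (1 + pcomp M V)) :
    PowerSeries.invOfUnit
        (1 - PowerSeries.C (R := Polynomial ℂ) Polynomial.X * plift U + plift (pcomp R U)) 1 =
      PowerSeries.invOfUnit
          (1 - PowerSeries.C (R := Polynomial ℂ) Polynomial.X * plift V) 1 *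
        (1 - plift (pcomp η V)) := by
  have hV : HasSubst V := HasSubst.of_constantCoeff_zero' hV0
  have hUV : pcomp (X * (1 + M)) V = U := by
    rw [hU, pcomp_eq_subst hV0, pcomp_eq_subst hV0, subst_mul hV, subst_X hV, subst_add hV,
      subst_one hV]
  have hRU : pcomp R U = pcomp M V := by
    rw [← hUV, ← pcomp_pcomp hV0 (by simp), hR]
  have hηV : (1 + pcomp M V) * (1 - pcomp η V) = 1 := by
    have h := congrArg (subst V) hη
    rw [subst_mul hV, subst_add hV, subst_one hV, ← pcomp_eq_subst hV0,
      ← pcomp_eq_subst hV0] at h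
    linear_combination -h
  have hfactor : 1 - C (Polynomial.X : Polynomial ℂ) * plift U + plift (pcomp R U) =
      (1 + plift (pcomp M V)) * (1 - C Polynomial.X * plift V) := by
    rw [hRU, hU]
    simp only [map_mul, map_add, map_one]
    ring
  rw [hfactor]
  apply invOfUnit_mul_eq_of_mul_eq_one
  · simp [plift, constantCoeff_map, constantCoeff_pcomp, hM0]
  · simp [plift, constantCoeff_map, hV0]
  · simpa only [map_mul, map_add, map_sub, map_one] using congrArg plift hηV

/-- Free/Boolean change of variables: if `R(z(1+M)) = M`, `η = M (1+M)⁻¹`, and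
`U = V (1 + M(V))`, then `(1 - x U + R(U))⁻¹ = (1 - x V)⁻¹ (1 - η(V))`. -/
theorem stmt_8 (M R η V U : PowerSeries ℂ)
    (hM0 : PowerSeries.constantCoeff M = 0)
    (hR0 : PowerSeries.constantCoeff R = 0)
    (hη0 : PowerSeries.constantCoeff η = 0)
    (hV0 : PowerSeries.constantCoeff V = 0)
    (hV1 : PowerSeries.coeff 1 V ≠ 0)
    (hR : pcomp R (PowerSeries.X * (1 + M)) = M)
    (hη : η * (1 + M) = M)
    (hU : U = V * (1 + pcomp M V)) :
    PowerSeries.invOfUnit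
        (1 - PowerSeries.C (R := Polynomial ℂ) Polynomial.X * plift U + plift (pcomp R U)) 1 =
      PowerSeries.invOfUnit
          (1 - PowerSeries.C (R := Polynomial ℂ) Polynomial.X * plift V) 1 *
        (1 - plift (pcomp η V)) :=
  stmt_8_general M R η V U hM0 hV0 hR hη hU
end

section
/- Suppose S is a centered real random variable (or a unital linear functional on C[x] with mean zero and variance 1) whose moments satisfy φ(S^{n+2}) = φ(S^n) + a·φ(S^{n+1}) for all n ≥ 0, with φ(S) = 0. Then the moment generating series satisfies M(z) = z²/(1 - a z - z²), and hence the distribution of S is the Bernoulli distribution (1/(1+β²)) δ_β + (β²/(1+β²)) δ_{-1/β} where β - 1/β = a. -/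
/-!
By the recurrence, multiplying the moment series by `1 - a z - z²` kills every coefficient
from `z²` on, leaving a polynomial fixed by `m 0` and `m 1`. The roots of `t² = 1 + a t` are
`β` and `-1/β`, so `m n` is a combination of `β ^ n` and `(-1/β) ^ n`, whose weights are fixed
by `m 0 = 1` and `m 1 = 0`.
-/

open PowerSeries

theorem sq_eq_one_add_mul_of_sub_one_div_eq {K : Type*} [Field K] {a r : K} (hr : r ≠ 0)
    (h : r - 1 / r = a) : r ^ 2 = 1 + a * r := by
  subst h
  field_simp
  ring

namespace LinearRecurrence

def fibPoly {R : Type*} [CommSemiring R] (a : R) : LinearRecurrence R :=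
  ⟨2, ![1, a]⟩

theorem isSolution_fibPoly_iff {R : Type*} [CommSemiring R] (a : R) (u : ℕ → R) :
    (fibPoly a).IsSolution u ↔ ∀ n, u (n + 2) = u n + a * u (n + 1) := by
  change (∀ n, u (n + 2) = ∑ i : Fin 2, ![1, a] i * u (n + i)) ↔ _
  simp [Fin.sum_univ_two]

theorem isSolution_fibPoly_add_geom {R : Type*} [CommRing R] {a r s : R}
    (hr : r ^ 2 = 1 + a * r) (hs : s ^ 2 = 1 + a * s) (c d : R) :
    (fibPoly a).IsSolution fun n => c * r ^ n + d * s ^ n := by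
  rw [isSolution_fibPoly_iff]
  intro n
  linear_combination c * r ^ n * hr + d * s ^ n * hs

theorem eq_of_isSolution_fibPoly {K : Type*} [Field K] {a β : K} (hβ : β ≠ 0)
    (hβ' : 1 + β ^ 2 ≠ 0) (hβa : β - 1 / β = a) {m : ℕ → K} (hm : (fibPoly a).IsSolution m)
    (h0 : m 0 = 1) (h1 : m 1 = 0) (n : ℕ) :
    m n = (β ^ n + β ^ 2 * (-1 / β) ^ n) / (1 + β ^ 2) := by
  have hγ : -1 / β - 1 / (-1 / β) = a := by
    rw [← hβa]
    field_simp
    ring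
  have hsol := isSolution_fibPoly_add_geom (sq_eq_one_add_mul_of_sub_one_div_eq hβ hβa)
    (sq_eq_one_add_mul_of_sub_one_div_eq (by simpa using hβ) hγ) (1 / (1 + β ^ 2))
    (β ^ 2 / (1 + β ^ 2))
  have hm_eq := ((fibPoly a).eq_iff_eqOn_range_order _ _ hm hsol).2 <| by
    rintro (_ | _ | n) hn
    · show m 0 = 1 / (1 + β ^ 2) * β ^ 0 + β ^ 2 / (1 + β ^ 2) * (-1 / β) ^ 0
      rw [h0]
      field_simp
    · show m 1 = 1 / (1 + β ^ 2) * β ^ 1 + β ^ 2 / (1 + β ^ 2) * (-1 / β) ^ 1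
      rw [h1]
      field_simp
      ring
    · simp [fibPoly] at hn
  rw [hm_eq]
  ring

end LinearRecurrence

theorem PowerSeries.mk_mul_one_sub_C_mul_X_sub_X_sq {R : Type*} [CommRing R] {a : R}
    {m : ℕ → R} (hrec : ∀ n, m (n + 2) = m n + a * m (n + 1)) :
    mk m * (1 - C a * X - X ^ 2) = C (m 0) + C (m 1 - a * m 0) * X := by
  rw [show mk m * (1 - C a * X - X ^ 2) = mk m - C a * (mk m * X) - mk m * X ^ 2 by ring]
  ext (_ | _ | n) <;> simp [coeff_succ_mul_X, coeff_mul_X_pow', hrec]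

/-- If the moments of a centered variable satisfy `m_{n+2} = m_n + a m_{n+1}` (with
`m_0 = 1`, `m_1 = 0`), then `M(z)(1 - az - z²) = z²`, and the moments are those of the
Bernoulli distribution `(1/(1+β²)) δ_β + (β²/(1+β²)) δ_{-1/β}` whenever `β - 1/β = a`. -/
theorem stmt_10 (a : ℝ) (m : ℕ → ℝ) (h0 : m 0 = 1) (h1 : m 1 = 0)
    (hrec : ∀ n : ℕ, m (n + 2) = m n + a * m (n + 1))
    (M : PowerSeries ℝ) (hM : M = PowerSeries.mk fun n => if n = 0 then 0 else m n) :
    M * (1 - PowerSeries.C a * PowerSeries.X - PowerSeries.X ^ 2) = PowerSeries.X ^ 2 ∧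
    ∀ β : ℝ, β ≠ 0 → β - 1 / β = a →
      ∀ n : ℕ, m n = (β ^ n + β ^ 2 * (-1 / β) ^ n) / (1 + β ^ 2) := by
  refine ⟨?_, fun β hβ hβa => LinearRecurrence.eq_of_isSolution_fibPoly hβ (by positivity) hβa
    ((LinearRecurrence.isSolution_fibPoly_iff a m).2 hrec) h0 h1⟩
  have hM_eq : M = mk m - 1 := by
    ext (_ | n) <;> simp [hM, h0]
  rw [hM_eq, sub_mul, mk_mul_one_sub_C_mul_X_sub_X_sq hrec, h0, h1]
  simp only [map_one, mul_one, zero_sub, map_neg, neg_mul]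
  ring
end

section
/- Let φ be a linear functional on C[x] whose monic orthogonal polynomials P_n satisfy x P_n = P_{n+1} + β_n P_n + γ_n P_{n-1} (Jacobi parameters β_n, γ_n). For t > 0, let φ^{⊎t} be the Boolean convolution power, defined by η_{φ^{⊎t}}(z) = t·η_φ(z). Then the Jacobi parameters of φ^{⊎t} are (t β_0, β_1, β_2, ...) and (t γ_1, γ_2, γ_3, ...), i.e., only β_0 and γ_1 are multiplied by t while all other Jacobi parameters are unchanged. -/
open PowerSeries

/-!
The Boolean cumulant series only sees the first floor of the continued fraction: from
`F 0 * (1 - β₀ z - γ₁ z² F 1) = 1` we get `η_φ = 1 - (F 0)⁻¹ = β₀ z + γ₁ z² F 1`.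
Multiplying `η_φ` by `t` therefore multiplies `β₀` and `γ₁` by `t` and leaves the tail `F 1`,
hence all deeper Jacobi parameters, unchanged.
-/

namespace PowerSeries

variable {K : Type*} [Field K]

noncomputable def jacobiDenom (b c : K) (G : K⟦X⟧) : K⟦X⟧ :=
  1 - C b * X - C c * X ^ 2 * G

@[simp]
theorem constantCoeff_jacobiDenom (b c : K) (G : K⟦X⟧) :
    constantCoeff (jacobiDenom b c G) = 1 := by
  simp [jacobiDenom]

theorem inv_eq_jacobiDenom {F G : K⟦X⟧} {b c : K} (h : F * jacobiDenom b c G = 1) :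
    F⁻¹ = jacobiDenom b c G := by
  have hF : constantCoeff F = 1 := by
    simpa using congrArg constantCoeff h
  rw [inv_eq_iff_mul_eq_one (by simp [hF]), mul_comm, h]

theorem one_sub_smul_one_sub_jacobiDenom (t b c : K) (G : K⟦X⟧) :
    1 - t • (1 - jacobiDenom b c G) = jacobiDenom (t * b) (t * c) G := by
  simp only [jacobiDenom, smul_eq_C_mul, map_mul]
  ring

noncomputable def booleanPowerTails (F : ℕ → K⟦X⟧) (t : K) : ℕ → K⟦X⟧ :=
  Function.update F 0 (1 - t • (1 - (F 0)⁻¹))⁻¹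

theorem booleanPowerTails_mul_jacobiDenom {β g : ℕ → K} {F : ℕ → K⟦X⟧}
    (hF : ∀ k, F k * jacobiDenom (β k) (g k) (F (k + 1)) = 1) (t : K) (k : ℕ) :
    booleanPowerTails F t k * jacobiDenom (if k = 0 then t * β 0 else β k)
      (if k = 0 then t * g 0 else g k) (booleanPowerTails F t (k + 1)) = 1 := by
  rcases k with _ | n
  · have hTop : 1 - t • (1 - (F 0)⁻¹) = jacobiDenom (t * β 0) (t * g 0) (F 1) := by
      rw [inv_eq_jacobiDenom (hF 0), one_sub_smul_one_sub_jacobiDenom]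
    simp only [booleanPowerTails, Function.update_self, if_pos, hTop,
      Function.update_of_ne (Nat.succ_ne_zero 0)]
    exact PowerSeries.inv_mul_cancel _ (by simp)
  · simpa [booleanPowerTails] using hF (n + 1)

end PowerSeries

theorem stmt_11_general (β g : ℕ → ℂ) (F : ℕ → PowerSeries ℂ)
    (hF : ∀ k, F k * (1 - PowerSeries.C (β k) * PowerSeries.X
        - PowerSeries.C (g k) * PowerSeries.X ^ 2 * F (k + 1)) = 1)
    (t : ℝ) :
    ∃ F' : ℕ → PowerSeries ℂ,
      (∀ k, F' k * (1 - PowerSeries.C (if k = 0 then (t : ℂ) * β 0 else β k) * PowerSeries.X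
          - PowerSeries.C (if k = 0 then (t : ℂ) * g 0 else g k) * PowerSeries.X ^ 2
            * F' (k + 1)) = 1) ∧
      F' 0 = (1 - (t : ℂ) • (1 - (F 0)⁻¹))⁻¹ :=
  ⟨booleanPowerTails F t, booleanPowerTails_mul_jacobiDenom hF t, Function.update_self ..⟩

/-- Boolean convolution powers and Jacobi parameters. If the moment generating function of
`φ` has the continued fraction expansion with Jacobi parameters `β k` and `g k` (where
`g k = γ_{k+1}`), witnessed by the sequence of tails `F k` satisfying
`F k (1 - β_k z - g_k z² F (k+1)) = 1` with `1 + M_φ = F 0`, then the Boolean power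
`φ^{⊎t}`, whose moment generating function is `(1 - t η_φ)⁻¹` with
`η_φ = 1 - (F 0)⁻¹`, has Jacobi parameters `(t β₀, β₁, β₂, …)` and `(t γ₁, γ₂, γ₃, …)`. -/
theorem stmt_11 (β g : ℕ → ℂ) (F : ℕ → PowerSeries ℂ)
    (hF : ∀ k, F k * (1 - PowerSeries.C (β k) * PowerSeries.X
        - PowerSeries.C (g k) * PowerSeries.X ^ 2 * F (k + 1)) = 1)
    (t : ℝ) (ht : 0 < t) :
    ∃ F' : ℕ → PowerSeries ℂ,
      (∀ k, F' k * (1 - PowerSeries.C (if k = 0 then (t : ℂ) * β 0 else β k) * PowerSeries.X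
          - PowerSeries.C (if k = 0 then (t : ℂ) * g 0 else g k) * PowerSeries.X ^ 2
            * F' (k + 1)) = 1) ∧
      F' 0 = (1 - (t : ℂ) • (1 - (F 0)⁻¹))⁻¹ :=
  stmt_11_general β g F hF t
end

section
/- If F(z) is a formal power series with constant term 1 satisfying F(z) = 1/(1 - b z - c z² F(z)) (continued fraction fixed point), and G(z) = 1/(1 - b₀ z - c₁ z² F(z)), then G is the moment generating function 1 + M(z) of a functional whose monic orthogonal polynomials satisfy x P_0 = P_1 + b₀, x P_n = P_{n+1} + b P_n + (c₁ if n=1 else c) P_{n-1} for n ≥ 1; i.e., periodic continued fractions after level one correspond to constant Jacobi parameters after level one. -/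
/-!
Let `φ` be the functional with moments `φ(xᵏ) = [zᵏ] G` and let `P_n` be the monic polynomials of
the recursion. The whole argument is carried by the generating series
`A_n(z) = ∑ₖ φ(xᵏ P_n) zᵏ`. The three-term recursion for `P_n` turns into
`A_n = z (A_{n+1} + β_n A_n + γ_{n-1} A_{n-1})` for `n ≥ 1`, which determines `A_{n+1}` from
`A_n` and `A_{n-1}`. For the periodic continued fraction the solution is explicit,
`A_0 = G`, `A_{n+1} = c₁ z F (c z F)ⁿ G`, and the required identities are exactly the fixed-point
equations for `F` and `G`. Since `A_{n+1}` is divisible by `z`, `φ(P_{n+1}) = [z⁰] A_{n+1} = 0`.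
-/

open PowerSeries
open scoped Polynomial

variable {R : Type*} [CommRing R]

noncomputable def momentFunctional (G : R⟦X⟧) : R[X] →ₗ[R] R :=
  Polynomial.lsum fun n => LinearMap.mulRight R (coeff n G)

theorem momentFunctional_X_pow (G : R⟦X⟧) (k : ℕ) :
    momentFunctional G (Polynomial.X ^ k) = coeff k G := by
  simp [momentFunctional, ← Polynomial.monomial_one_right_eq_X_pow, Polynomial.sum_monomial_index]

theorem momentFunctional_C_mul (G : R⟦X⟧) (a : R) (p : R[X]) :
    momentFunctional G (Polynomial.C a * p) = a * momentFunctional G p := by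
  rw [Polynomial.C_mul', map_smul, smul_eq_mul]

noncomputable def jacobiPoly (β γ : ℕ → R) : ℕ → R[X]
  | 0 => 1
  | 1 => Polynomial.X - Polynomial.C (β 0)
  | n + 2 => (Polynomial.X - Polynomial.C (β (n + 1))) * jacobiPoly β γ (n + 1)
      - Polynomial.C (γ n) * jacobiPoly β γ n

section jacobiPoly

variable (β γ : ℕ → R)

theorem X_mul_jacobiPoly_zero :
    Polynomial.X * jacobiPoly β γ 0 = jacobiPoly β γ 1 + Polynomial.C (β 0) := by
  simp [jacobiPoly]

theorem X_mul_jacobiPoly_succ (n : ℕ) :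
    Polynomial.X * jacobiPoly β γ (n + 1) = jacobiPoly β γ (n + 2)
      + Polynomial.C (β (n + 1)) * jacobiPoly β γ (n + 1) + Polynomial.C (γ n) * jacobiPoly β γ n := by
  rw [jacobiPoly]
  ring

theorem momentFunctional_X_pow_mul_jacobiPoly (A : ℕ → R⟦X⟧) (a : R)
    (h₀ : A 0 = C a + X * (A 1 + C (β 0) * A 0))
    (h : ∀ n, A (n + 1) = X * (A (n + 2) + C (β (n + 1)) * A (n + 1) + C (γ n) * A n)) :
    ∀ n k, momentFunctional (A 0) (Polynomial.X ^ k * jacobiPoly β γ n) = coeff k (A n) := by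
  intro n
  induction n using Nat.twoStepInduction with
  | zero => simp [jacobiPoly, momentFunctional_X_pow]
  | one =>
    intro k
    have hcoeff := congrArg (coeff (k + 1)) h₀
    simp only [map_add, coeff_succ_X_mul, coeff_C_mul, coeff_C, Nat.succ_ne_zero, if_false,
      zero_add] at hcoeff
    have hrec : Polynomial.X ^ k * jacobiPoly β γ 1
        = Polynomial.X ^ (k + 1) - Polynomial.C (β 0) * Polynomial.X ^ k := by
      rw [jacobiPoly]
      ring
    rw [hrec, map_sub, momentFunctional_C_mul, momentFunctional_X_pow, momentFunctional_X_pow]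
    linear_combination hcoeff
  | more n ih₀ ih₁ =>
    intro k
    have hcoeff := congrArg (coeff (k + 1)) (h n)
    simp only [map_add, coeff_succ_X_mul, coeff_C_mul] at hcoeff
    have hrec : Polynomial.X ^ k * jacobiPoly β γ (n + 2)
        = Polynomial.X ^ (k + 1) * jacobiPoly β γ (n + 1)
          - Polynomial.C (β (n + 1)) * (Polynomial.X ^ k * jacobiPoly β γ (n + 1))
          - Polynomial.C (γ n) * (Polynomial.X ^ k * jacobiPoly β γ n) := by
      rw [jacobiPoly]
      ring
    rw [hrec, map_sub, map_sub, momentFunctional_C_mul, momentFunctional_C_mul, ih₀, ih₁, ih₁]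
    linear_combination hcoeff

end jacobiPoly

def periodicParam (a₀ a : R) : ℕ → R
  | 0 => a₀
  | _ + 1 => a

noncomputable def periodicMomentSeries (c c₁ : R) (F G : R⟦X⟧) : ℕ → R⟦X⟧
  | 0 => G
  | n + 1 => C c₁ * X * F * (C c * X * F) ^ n * G

section periodicMomentSeries

variable {b c b₀ c₁ : R} {F G : R⟦X⟧}

theorem periodicMomentSeries_zero_eq (hG : G * (1 - C b₀ * X - C c₁ * X ^ 2 * F) = 1) :
    periodicMomentSeries c c₁ F G 0 = C 1 + X * (periodicMomentSeries c c₁ F G 1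
      + C b₀ * periodicMomentSeries c c₁ F G 0) := by
  simp only [periodicMomentSeries, map_one, pow_zero]
  linear_combination hG

theorem periodicMomentSeries_succ_eq (hF : F * (1 - C b * X - C c * X ^ 2 * F) = 1) (n : ℕ) :
    periodicMomentSeries c c₁ F G (n + 1) = X * (periodicMomentSeries c c₁ F G (n + 2)
      + C b * periodicMomentSeries c c₁ F G (n + 1)
      + C (periodicParam c₁ c n) * periodicMomentSeries c c₁ F G n) := by
  cases n with
  | zero =>
    simp only [periodicMomentSeries, periodicParam]
    linear_combination (C c₁ * X * G) * hF
  | succ n =>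
    simp only [periodicMomentSeries, periodicParam]
    linear_combination (C c₁ * C c * X ^ 2 * F * G * (C c * X * F) ^ n) * hF

end periodicMomentSeries

theorem stmt_13_general (b c b₀ c₁ : ℂ) (F G : PowerSeries ℂ)
    (hF : F * (1 - PowerSeries.C b * PowerSeries.X
        - PowerSeries.C c * PowerSeries.X ^ 2 * F) = 1)
    (hG : G * (1 - PowerSeries.C b₀ * PowerSeries.X
        - PowerSeries.C c₁ * PowerSeries.X ^ 2 * F) = 1) :
    ∃ (P : ℕ → Polynomial ℂ) (φ : Polynomial ℂ →ₗ[ℂ] ℂ),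
      P 0 = 1 ∧
      Polynomial.X * P 0 = P 1 + Polynomial.C b₀ ∧
      Polynomial.X * P 1 = P 2 + Polynomial.C b * P 1 + Polynomial.C c₁ * P 0 ∧
      (∀ n : ℕ, Polynomial.X * P (n + 2)
          = P (n + 3) + Polynomial.C b * P (n + 2) + Polynomial.C c * P (n + 1)) ∧
      φ (P 0) = 1 ∧ (∀ n : ℕ, φ (P (n + 1)) = 0) ∧
      (∀ n : ℕ, PowerSeries.coeff n G = φ (Polynomial.X ^ n)) := by
  let β := periodicParam b₀ b
  let γ := periodicParam c₁ c
  have hmoments := momentFunctional_X_pow_mul_jacobiPoly β γ (periodicMomentSeries c c₁ F G) 1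
    (periodicMomentSeries_zero_eq hG) (periodicMomentSeries_succ_eq hF)
  refine ⟨jacobiPoly β γ, momentFunctional G, rfl, X_mul_jacobiPoly_zero β γ,
    X_mul_jacobiPoly_succ β γ 0, fun n => X_mul_jacobiPoly_succ β γ (n + 1), ?_, fun n => ?_,
    fun n => (momentFunctional_X_pow G n).symm⟩
  · rw [jacobiPoly, ← pow_zero Polynomial.X, momentFunctional_X_pow]
    simpa using congrArg constantCoeff hG
  · simpa [periodicMomentSeries, mul_assoc] using hmoments (n + 1) 0

/-- Periodic continued fractions after level one correspond to constant Jacobi parameters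
after level one: if `F = (1 - bz - cz²F)⁻¹` and `G = (1 - b₀z - c₁z²F)⁻¹`, then `G` is the
moment generating function `1 + M` of a unital functional `φ` with `φ(P_n) = δ_{n,0}`,
whose monic polynomials satisfy `xP₀ = P₁ + b₀`, `xP₁ = P₂ + bP₁ + c₁P₀`, and
`xP_n = P_{n+1} + bP_n + cP_{n-1}` for `n ≥ 2`. -/
theorem stmt_13 (b c b₀ c₁ : ℂ) (F G : PowerSeries ℂ)
    (hF1 : PowerSeries.constantCoeff F = 1)
    (hF : F * (1 - PowerSeries.C b * PowerSeries.X
        - PowerSeries.C c * PowerSeries.X ^ 2 * F) = 1)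
    (hG : G * (1 - PowerSeries.C b₀ * PowerSeries.X
        - PowerSeries.C c₁ * PowerSeries.X ^ 2 * F) = 1) :
    ∃ (P : ℕ → Polynomial ℂ) (φ : Polynomial ℂ →ₗ[ℂ] ℂ),
      P 0 = 1 ∧
      Polynomial.X * P 0 = P 1 + Polynomial.C b₀ ∧
      Polynomial.X * P 1 = P 2 + Polynomial.C b * P 1 + Polynomial.C c₁ * P 0 ∧
      (∀ n : ℕ, Polynomial.X * P (n + 2)
          = P (n + 3) + Polynomial.C b * P (n + 2) + Polynomial.C c * P (n + 1)) ∧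
      φ (P 0) = 1 ∧ (∀ n : ℕ, φ (P (n + 1)) = 0) ∧
      (∀ n : ℕ, PowerSeries.coeff n G = φ (Polynomial.X ^ n)) :=
  stmt_13_general b c b₀ c₁ F G hF hG
end
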